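/- For every integer n ≥ 6 and every i ∈ {1,…,n}, let H be a connected induced subgraph of the subnetwork AN_n^i with exactly 3 vertices. Then H is either a 3-cycle (triangle) or a 2-path (path with three vertices and two edges); moreover, if H is a 3-cycle then |N(H)| = 3n − 12, and if H is a 2-path then 3n − 11 ≤ |N(H)| ≤ 3n − 10, where N(H) is the set of vertices of AN_n^i not in H that are adjacent in AN_n^i to some vertex of H. -/

import Mathlib

open SimpleGraph

/-- Vertices of the alternating group network: even permutations of `{1,…,n}`
(modeled as permutations of `Fin n` with sign `1`). A permutation `p` is viewed
as the sequence `p₁p₂⋯p_n` where `p_j` (the symbol in position `j`) is `p ⟨j-1,_⟩`. -/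
abbrev ANVertex (n : ℕ) : Type := {p : Equiv.Perm (Fin n) // Equiv.Perm.sign p = 1}

/-- The adjacency relation of the `n`-dimensional alternating group network `AN_n`
(positions are 1-based in the informal description; position `j` is `⟨j-1,_⟩ : Fin n`). -/
def ANAdj (n : ℕ) (p q : Equiv.Perm (Fin n)) : Prop :=
  ∃ hn : 3 ≤ n,
    ((p ⟨0, by omega⟩ = q ⟨1, by omega⟩ ∧ p ⟨1, by omega⟩ = q ⟨2, by omega⟩ ∧
      p ⟨2, by omega⟩ = q ⟨0, by omega⟩ ∧ ∀ j : Fin n, 3 ≤ (j : ℕ) → p j = q j) ∨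
     (p ⟨0, by omega⟩ = q ⟨2, by omega⟩ ∧ p ⟨1, by omega⟩ = q ⟨0, by omega⟩ ∧
      p ⟨2, by omega⟩ = q ⟨1, by omega⟩ ∧ ∀ j : Fin n, 3 ≤ (j : ℕ) → p j = q j) ∨
     (∃ i : Fin n, 3 ≤ (i : ℕ) ∧ p ⟨0, by omega⟩ = q ⟨1, by omega⟩ ∧
      p ⟨1, by omega⟩ = q ⟨0, by omega⟩ ∧ p ⟨2, by omega⟩ = q i ∧ p i = q ⟨2, by omega⟩ ∧
      ∀ j : Fin n, 3 ≤ (j : ℕ) → j ≠ i → p j = q j))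

/-- The `n`-dimensional alternating group network `AN_n`. -/
def AN (n : ℕ) : SimpleGraph (ANVertex n) where
  Adj x y := ANAdj n x.1 y.1
  symm := by
    refine ⟨?_⟩
    rintro x y ⟨hn, h⟩
    refine ⟨hn, ?_⟩
    rcases h with ⟨h1, h2, h3, h4⟩ | ⟨h1, h2, h3, h4⟩ | ⟨i, hi, h1, h2, h3, h4, h5⟩
    · exact Or.inr (Or.inl ⟨h3.symm, h1.symm, h2.symm, fun j hj => (h4 j hj).symm⟩)
    · exact Or.inl ⟨h2.symm, h3.symm, h1.symm, fun j hj => (h4 j hj).symm⟩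
    · exact Or.inr (Or.inr ⟨i, hi, h2.symm, h1.symm, h4.symm, h3.symm,
        fun j hj hji => (h5 j hj hji).symm⟩)
  loopless := by
    refine ⟨?_⟩
    rintro x ⟨hn, ⟨h1, -⟩ | ⟨h1, -⟩ | ⟨i, hi, h1, -⟩⟩ <;>
      simpa [Fin.ext_iff] using x.1.injective h1

/-- The `ℓ`-component connectivity `κ_ℓ(G)`: the minimum number of vertices whose
removal from `G` results in a graph with at least `ℓ` connected components or a
graph with fewer than `ℓ` vertices. -/
noncomputable def componentConnectivity {V : Type*} [Fintype V] (G : SimpleGraph V)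
    (l : ℕ) : ℕ :=
  sInf {k | ∃ F : Finset V, F.card = k ∧
    (l ≤ Nat.card ((G.induce (↑F : Set V)ᶜ).ConnectedComponent) ∨
     Fintype.card V - F.card < l)}

/-- The subnetwork `AN_n^i`: the set of vertices whose last symbol equals `i`. -/
def ANLayer (n : ℕ) (hn : 1 ≤ n) (i : Fin n) : Set (ANVertex n) :=
  {x | x.1 ⟨n - 1, by omega⟩ = i}

/-- `N(H)` for a set `S` of vertices of the subnetwork `AN_n^i`: the vertices of
`AN_n^i` not in `S` that are adjacent (within `AN_n^i`) to some vertex of `S`. -/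
def layerNbhd (n : ℕ) (hn : 1 ≤ n) (i : Fin n) (S : Set (ANVertex n)) : Set (ANVertex n) :=
  {z | z ∈ ANLayer n hn i ∧ z ∉ S ∧ ∃ x ∈ S, (AN n).Adj z x}

/-- A set of three mutually adjacent vertices of `AN_n` (a `3`-cycle). -/
def SetIsTriangle (n : ℕ) (S : Set (ANVertex n)) : Prop :=
  ∃ a b c : ANVertex n, S = {a, b, c} ∧
    (AN n).Adj a b ∧ (AN n).Adj b c ∧ (AN n).Adj a c

/-- A set of three vertices of `AN_n` inducing a `2`-path (two edges). -/
def SetIsTwoPath (n : ℕ) (S : Set (ANVertex n)) : Prop :=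
  ∃ a b c : ANVertex n, S = {a, b, c} ∧ a ≠ c ∧
    (AN n).Adj a b ∧ (AN n).Adj b c ∧ ¬ (AN n).Adj a c

/-!
The generators of `AN_n` are `rot = (1 3 2)`, its inverse and the double transpositions
`(1 2)(3 m)` for `m ≥ 4`, and `q` is adjacent to `p` iff `q = p * g` for a generator `g`.
Inside `AN_n^i` the usable generators are those fixing position `n`, so the layer is
`(n - 2)`-regular. A nontrivial product `p * q` of two generators determines `p`, because
`(p * q)⁻¹` sends `3` to `p 3`. Hence two distinct vertices have at most one common neighbour,
and an edge lies on a triangle only if it is a rotation edge, so each vertex lies on exactly one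
triangle. Inclusion–exclusion over the neighbourhoods of the three vertices of `H` gives
`|N(H)| = 3 (n - 2) - 4 - t`, where `t` counts the edges of `H` lying on a triangle:
`t = 2` for a `3`-cycle and `t ≤ 1` for a `2`-path.
-/

namespace SimpleGraph

variable {V : Type*} (G : SimpleGraph V)

def extNbhd (S : Set V) : Set V := {z | z ∉ S ∧ ∃ x ∈ S, G.Adj z x}

variable {G}

lemma extNbhd_triple {a b c : V} :
    G.extNbhd {a, b, c} =
      (G.neighborSet a ∪ G.neighborSet b ∪ G.neighborSet c) \ {a, b, c} := by
  ext z
  simp only [extNbhd, Set.mem_ofPred_eq, Set.mem_sdiff, Set.mem_union, mem_neighborSet,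
    Set.exists_mem_insert, exists_eq_left, Set.mem_singleton_iff, G.adj_comm z]
  tauto

lemma ncard_extNbhd_add [Finite V] {a b c : V} (hab : G.Adj a b) (hbc : G.Adj b c)
    (hac : a ≠ c) (hcommon : G.commonNeighbors a c = {b}) :
    (G.extNbhd {a, b, c}).ncard + (G.commonNeighbors a b).ncard +
        (G.commonNeighbors b c).ncard + 4 =
      (G.neighborSet a).ncard + (G.neighborSet b).ncard + (G.neighborSet c).ncard := by
  have hsub : {a, b, c} ⊆ G.neighborSet a ∪ G.neighborSet b ∪ G.neighborSet c := by
    simp only [Set.insert_subset_iff, Set.singleton_subset_iff, Set.mem_union, mem_neighborSet]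
    exact ⟨Or.inl (Or.inr hab.symm), Or.inl (Or.inl hab), Or.inl (Or.inr hbc)⟩
  have hthree : ({a, b, c} : Set V).ncard = 3 :=
    Set.ncard_eq_three.2 ⟨a, b, c, hab.ne, hac, hbc.ne, rfl⟩
  have hinter : (G.neighborSet a ∪ G.neighborSet b) ∩ G.neighborSet c =
      insert b (G.commonNeighbors b c) := by
    rw [Set.union_inter_distrib_right, ← commonNeighbors_eq, hcommon, ← commonNeighbors_eq,
      Set.singleton_union]
  have hb : b ∉ G.commonNeighbors b c := G.notMem_commonNeighbors_left b c
  have h₁ := Set.ncard_union_add_ncard_inter (G.neighborSet a) (G.neighborSet b)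
  have h₂ := Set.ncard_union_add_ncard_inter
    (G.neighborSet a ∪ G.neighborSet b) (G.neighborSet c)
  have h₃ := Set.ncard_sdiff_add_ncard_of_subset hsub
  rw [hinter, Set.ncard_insert_of_notMem hb] at h₂
  rw [extNbhd_triple, commonNeighbors_eq]
  omega

lemma exists_two_path_of_induce_connected {S : Set V} (hS : S.ncard = 3)
    (hconn : (G.induce S).Connected) :
    ∃ a b c, S = {a, b, c} ∧ a ≠ c ∧ G.Adj a b ∧ G.Adj b c := by
  obtain ⟨x, y, z, hxy, hxz, hyz, rfl⟩ := Set.ncard_eq_three.1 hS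
  have : Nontrivial ({x, y, z} : Set V) :=
    ⟨⟨x, by simp⟩, ⟨y, by simp⟩, fun h => hxy (congrArg Subtype.val h)⟩
  have hnbr : ∀ v ∈ ({x, y, z} : Set V), ∃ w ∈ ({x, y, z} : Set V), G.Adj v w :=
    fun v hv => by
      obtain ⟨w, hw⟩ := hconn.preconnected.exists_adj_of_nontrivial ⟨v, hv⟩
      exact ⟨w, w.2, hw⟩
  obtain ⟨u, hu, hx⟩ := hnbr x (by simp)
  obtain ⟨v, hv, hy⟩ := hnbr y (by simp)
  obtain ⟨w, hw, hz⟩ := hnbr z (by simp)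
  simp only [Set.mem_insert_iff, Set.mem_singleton_iff] at hu hv hw
  by_cases hxy' : G.Adj x y
  · by_cases hyz' : G.Adj y z
    · exact ⟨x, y, z, rfl, hxz, hxy', hyz'⟩
    · have hzx : G.Adj z x := by
        rcases hw with rfl | rfl | rfl
        · exact hz
        · exact absurd hz.symm hyz'
        · exact absurd hz (G.irrefl)
      exact ⟨y, x, z, Set.insert_comm _ _ _, hyz, hxy'.symm, hzx.symm⟩
  · have hxz' : G.Adj x z := by
      rcases hu with rfl | rfl | rfl
      · exact absurd hx (G.irrefl)
      · exact absurd hx hxy'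
      · exact hx
    have hyz' : G.Adj y z := by
      rcases hv with rfl | rfl | rfl
      · exact absurd hy.symm hxy'
      · exact absurd hy (G.irrefl)
      · exact hy
    exact ⟨x, z, y, by rw [Set.pair_comm], hxy, hxz', hyz'.symm⟩

end SimpleGraph

namespace AN

open Equiv Equiv.Perm

section Generators

variable {α : Type*} (e : Fin 3 ↪ α)

lemma forall_iff_range {P : α → Prop} :
    (∀ j, P j) ↔ P (e 0) ∧ P (e 1) ∧ P (e 2) ∧ ∀ j ∉ Set.range e, P j := by
  refine ⟨fun h => ⟨h _, h _, h _, fun j _ => h j⟩, fun ⟨h0, h1, h2, h⟩ j => ?_⟩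
  by_cases hj : j ∈ Set.range e
  · obtain ⟨k, rfl⟩ := hj
    fin_cases k <;> assumption
  · exact h j hj

lemma forall_iff_range_of_notMem {m : α} (hm : m ∉ Set.range e) {P : α → Prop} :
    (∀ j, P j) ↔ P (e 0) ∧ P (e 1) ∧ P (e 2) ∧ P m ∧ ∀ j ∉ Set.range e, j ≠ m → P j := by
  rw [forall_iff_range e]
  refine and_congr_right' (and_congr_right' (and_congr_right' ?_))
  classical
  exact ⟨fun h => ⟨h m hm, fun j hj _ => h j hj⟩,
    fun ⟨hm', h⟩ j hj => if hjm : j = m then hjm ▸ hm' else h j hj hjm⟩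

lemma apply_ne_of_notMem {j : α} (hj : j ∉ Set.range e) (k : Fin 3) : e k ≠ j :=
  fun h => hj ⟨k, h⟩

variable [DecidableEq α]

def rot : Perm α := swap (e 0) (e 1) * swap (e 0) (e 2)

def doubleSwap (m : α) : Perm α := swap (e 0) (e 1) * swap (e 2) m

/-- With `e` marking the first three positions, `AN_n` is the Cayley graph of these generators
acting on the right: clauses (i), (ii), (iii) of the adjacency are right multiplication by `rot`,
`rot⁻¹` and `doubleSwap e i`. -/
def gens : Set (Perm α) :=
  insert (rot e) (insert (rot e)⁻¹ (doubleSwap e '' (Set.range e)ᶜ))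

variable {e}

@[simp] lemma rot_apply_zero : rot e (e 0) = e 2 := by simp [rot, swap_apply_of_ne_of_ne]
@[simp] lemma rot_apply_one : rot e (e 1) = e 0 := by simp [rot, swap_apply_of_ne_of_ne]
@[simp] lemma rot_apply_two : rot e (e 2) = e 1 := by simp [rot]

lemma rot_apply_of_notMem {j : α} (hj : j ∉ Set.range e) : rot e j = j := by
  simp [rot, swap_apply_of_ne_of_ne, (apply_ne_of_notMem e hj _).symm]

@[simp] lemma rot_inv_apply_zero : (rot e)⁻¹ (e 0) = e 1 := by rw [inv_eq_iff_eq, rot_apply_one]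
@[simp] lemma rot_inv_apply_one : (rot e)⁻¹ (e 1) = e 2 := by rw [inv_eq_iff_eq, rot_apply_two]
@[simp] lemma rot_inv_apply_two : (rot e)⁻¹ (e 2) = e 0 := by
  rw [inv_eq_iff_eq, rot_apply_zero]

lemma rot_inv_apply_of_notMem {j : α} (hj : j ∉ Set.range e) : (rot e)⁻¹ j = j := by
  rw [inv_eq_iff_eq, rot_apply_of_notMem hj]

section DoubleSwap

variable {m : α}

@[simp] lemma doubleSwap_apply_self : doubleSwap e m m = e 2 := by
  simp [doubleSwap, swap_apply_of_ne_of_ne]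

lemma doubleSwap_apply_of_notMem {j : α} (hj : j ∉ Set.range e) (hjm : j ≠ m) :
    doubleSwap e m j = j := by
  simp [doubleSwap, swap_apply_of_ne_of_ne, (apply_ne_of_notMem e hj _).symm, hjm]

variable (hm : m ∉ Set.range e)
include hm

@[simp] lemma doubleSwap_apply_zero : doubleSwap e m (e 0) = e 1 := by
  simp [doubleSwap, swap_apply_of_ne_of_ne, apply_ne_of_notMem e hm]

@[simp] lemma doubleSwap_apply_one : doubleSwap e m (e 1) = e 0 := by
  simp [doubleSwap, swap_apply_of_ne_of_ne, apply_ne_of_notMem e hm]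

@[simp] lemma doubleSwap_apply_two : doubleSwap e m (e 2) = m := by
  simp [doubleSwap, swap_apply_of_ne_of_ne, (apply_ne_of_notMem e hm _).symm]

lemma doubleSwap_mul_self : doubleSwap e m * doubleSwap e m = 1 := by
  rw [Perm.ext_iff, forall_iff_range_of_notMem e hm]
  refine ⟨by simp [hm], by simp [hm], by simp [hm], by simp [hm], fun j hj hjm => ?_⟩
  simp [doubleSwap_apply_of_notMem hj hjm]

end DoubleSwap

lemma sign_rot [Fintype α] : sign (rot e) = 1 := by
  simp [rot]

lemma sign_doubleSwap [Fintype α] {m : α} (hm : m ∉ Set.range e) :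
    sign (doubleSwap e m) = 1 := by
  simp [doubleSwap, apply_ne_of_notMem e hm]

lemma sign_of_mem_gens [Fintype α] {g : Perm α} (hg : g ∈ gens e) : sign g = 1 := by
  rcases hg with rfl | rfl | ⟨m, hm, rfl⟩
  · exact sign_rot
  · rw [sign_inv, sign_rot]
  · exact sign_doubleSwap hm

lemma rot_mul_rot : rot e * rot e = (rot e)⁻¹ := by
  rw [eq_inv_iff_mul_eq_one, Perm.ext_iff, forall_iff_range e]
  refine ⟨by simp, by simp, by simp, fun j hj => ?_⟩
  simp [rot_apply_of_notMem hj]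

lemma inv_mem_gens {g : Perm α} (hg : g ∈ gens e) : g⁻¹ ∈ gens e := by
  rcases hg with rfl | rfl | ⟨m, hm, rfl⟩
  · exact Or.inr (Or.inl rfl)
  · exact Or.inl (inv_inv _)
  · rw [inv_eq_of_mul_eq_one_right (doubleSwap_mul_self hm)]
    exact Or.inr (Or.inr ⟨m, hm, rfl⟩)

lemma one_notMem_gens : (1 : Perm α) ∉ gens e := by
  rintro (h | h | ⟨m, hm : m ∉ Set.range e, h⟩)
  · simpa using congr($h (e 0))
  · simpa using congr($h (e 0))
  · simpa [hm] using congr($h (e 0))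

lemma apply_two_injOn : Set.InjOn (fun g : Perm α => g (e 2)) (gens e) := by
  rintro g (rfl | rfl | ⟨l, hl : l ∉ Set.range e, rfl⟩) h
    (rfl | rfl | ⟨m, hm : m ∉ Set.range e, rfl⟩) hgh <;>
    simp_all [apply_ne_of_notMem e]

lemma image_apply_two_gens : (fun g : Perm α => g (e 2)) '' gens e = {e 2}ᶜ := by
  ext j
  constructor
  · rintro ⟨g, rfl | rfl | ⟨m, hm : m ∉ Set.range e, rfl⟩, rfl⟩
    · simp
    · simp
    · simpa [hm] using (apply_ne_of_notMem e hm 2).symm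
  · revert j
    rw [forall_iff_range e]
    refine ⟨fun _ => ⟨(rot e)⁻¹, Or.inr (Or.inl rfl), by simp⟩,
      fun _ => ⟨rot e, Or.inl rfl, by simp⟩, fun h => absurd rfl h,
      fun j hj _ => ⟨doubleSwap e j, Or.inr (Or.inr ⟨j, hj, rfl⟩), by simp [hj]⟩⟩

lemma apply_eq_self_iff_of_mem_gens {g : Perm α} (hg : g ∈ gens e) {z : α}
    (hz : z ∉ Set.range e) : g z = z ↔ g (e 2) ≠ z := by
  rcases hg with rfl | rfl | ⟨m, hm : m ∉ Set.range e, rfl⟩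
  · simp [rot_apply_of_notMem hz, apply_ne_of_notMem e hz]
  · simp [rot_inv_apply_of_notMem hz, apply_ne_of_notMem e hz]
  · obtain rfl | hzm := eq_or_ne z m
    · simp [hz, apply_ne_of_notMem e hz 2]
    · simp [doubleSwap_apply_of_notMem hz hzm, hm, hzm.symm]

lemma ncard_setOf_mem_gens_apply_eq_self [Finite α] {z : α} (hz : z ∉ Set.range e) :
    {g ∈ gens e | g z = z}.ncard = Nat.card α - 2 := by
  have himage : (fun g : Perm α => g (e 2)) '' {g ∈ gens e | g z = z} = {e 2, z}ᶜ := by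
    ext j
    simp only [Set.mem_image, Set.mem_sep_iff, Set.mem_compl_iff, Set.mem_insert_iff,
      Set.mem_singleton_iff, not_or]
    constructor
    · rintro ⟨g, ⟨hg, hgz⟩, rfl⟩
      exact ⟨fun h => (image_apply_two_gens.subset ⟨g, hg, rfl⟩ : g (e 2) ∈ _) h,
        (apply_eq_self_iff_of_mem_gens hg hz).1 hgz⟩
    · rintro ⟨hj2, hjz⟩
      obtain ⟨g, hg, rfl⟩ := image_apply_two_gens.superset (Set.mem_compl_singleton_iff.2 hj2)
      exact ⟨g, ⟨hg, (apply_eq_self_iff_of_mem_gens hg hz).2 hjz⟩, rfl⟩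
  rw [← (apply_two_injOn.mono (Set.sep_subset _ _)).ncard_image, himage, Set.ncard_compl,
    Set.ncard_pair (apply_ne_of_notMem e hz 2)]

lemma eq_mul_rot_iff {p q : Perm α} : p = q * rot e ↔
    p (e 0) = q (e 2) ∧ p (e 1) = q (e 0) ∧ p (e 2) = q (e 1) ∧ ∀ j ∉ Set.range e, p j = q j := by
  rw [Perm.ext_iff, forall_iff_range e]
  simp +contextual only [Perm.mul_apply, rot_apply_zero, rot_apply_one, rot_apply_two,
    rot_apply_of_notMem, not_false_eq_true]

lemma eq_mul_rot_inv_iff {p q : Perm α} : p = q * (rot e)⁻¹ ↔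
    p (e 0) = q (e 1) ∧ p (e 1) = q (e 2) ∧ p (e 2) = q (e 0) ∧ ∀ j ∉ Set.range e, p j = q j := by
  rw [Perm.ext_iff, forall_iff_range e]
  simp +contextual only [Perm.mul_apply, rot_inv_apply_zero, rot_inv_apply_one,
    rot_inv_apply_two, rot_inv_apply_of_notMem, not_false_eq_true]

lemma eq_mul_doubleSwap_iff {m : α} (hm : m ∉ Set.range e) {p q : Perm α} :
    p = q * doubleSwap e m ↔ p (e 0) = q (e 1) ∧ p (e 1) = q (e 0) ∧ p (e 2) = q m ∧
      p m = q (e 2) ∧ ∀ j ∉ Set.range e, j ≠ m → p j = q j := by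
  rw [Perm.ext_iff, forall_iff_range_of_notMem e hm]
  simp +contextual only [Perm.mul_apply, doubleSwap_apply_zero hm, doubleSwap_apply_one hm,
    doubleSwap_apply_two hm, doubleSwap_apply_self, doubleSwap_apply_of_notMem, not_false_eq_true,
    Ne]

lemma mul_inv_apply_two {p q : Perm α} (hp : p ∈ gens e) (hq : q ∈ gens e) (hpq : p * q ≠ 1) :
    (p * q)⁻¹ (e 2) = p (e 2) := by
  rw [inv_eq_iff_eq, mul_apply]
  rcases hp with rfl | rfl | ⟨l, hl : l ∉ Set.range e, rfl⟩ <;>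
    rcases hq with rfl | rfl | ⟨m, hm : m ∉ Set.range e, rfl⟩
  case inr.inr.inr.inr =>
    obtain rfl | hlm := eq_or_ne l m
    · exact absurd (doubleSwap_mul_self hl) hpq
    · rw [doubleSwap_apply_two hl, doubleSwap_apply_of_notMem hl hlm, doubleSwap_apply_self]
  all_goals simp_all [rot_apply_of_notMem, rot_inv_apply_of_notMem]

lemma eq_of_mul_eq_mul {p q p' q' : Perm α} (hp : p ∈ gens e) (hq : q ∈ gens e)
    (hp' : p' ∈ gens e) (hq' : q' ∈ gens e) (h : p * q = p' * q') (hpq : p * q ≠ 1) :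
    p = p' :=
  apply_two_injOn hp hp' <| show p (e 2) = p' (e 2) by
    rw [← mul_inv_apply_two hp hq hpq, h, mul_inv_apply_two hp' hq' (h ▸ hpq)]

lemma eq_rot_or_of_mul_mem_gens {p q : Perm α} (hp : p ∈ gens e) (hq : q ∈ gens e)
    (hpq : p * q ∈ gens e) : p = rot e ∨ p = (rot e)⁻¹ := by
  have hp_eq : p = (p * q)⁻¹ := apply_two_injOn hp (inv_mem_gens hpq)
    (mul_inv_apply_two hp hq (fun h => one_notMem_gens (h ▸ hpq))).symm
  rcases hpq with h | h | ⟨m, hm : m ∉ Set.range e, h⟩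
  · exact Or.inr (h ▸ hp_eq)
  · exact Or.inl (by rw [hp_eq, h, inv_inv])
  · have hq1 : q = 1 := calc
      q = p⁻¹ * (p * q) := (inv_mul_cancel_left p q).symm
      _ = doubleSwap e m * doubleSwap e m := by rw [inv_eq_iff_eq_inv.mpr hp_eq, ← h]
      _ = 1 := doubleSwap_mul_self hm
    exact absurd (hq1 ▸ hq) one_notMem_gens

end Generators

section Network

variable {n : ℕ}

lemma notMem_range_castLEEmb_iff (h : 3 ≤ n) {j : Fin n} :
    j ∉ Set.range (Fin.castLEEmb h) ↔ 3 ≤ (j : ℕ) := by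
  simp [Fin.range_castLE]

lemma ANAdj_iff (h : 3 ≤ n) {p q : Perm (Fin n)} :
    ANAdj n p q ↔ q⁻¹ * p ∈ gens (Fin.castLEEmb h) := by
  simp only [gens, Set.mem_insert_iff, Set.mem_image, Set.mem_compl_iff, inv_mul_eq_iff_eq_mul,
    eq_comm (b := q⁻¹ * p), eq_mul_rot_iff, eq_mul_rot_inv_iff]
  rw [exists_congr fun m => and_congr_right fun hm => eq_mul_doubleSwap_iff hm, or_left_comm]
  simp only [notMem_range_castLEEmb_iff]
  -- `Fin.castLEEmb h k` unfolds to the position `⟨k, _⟩` used in `ANAdj`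
  exact ⟨fun ⟨_, h⟩ => h, fun h' => ⟨h, h'⟩⟩

lemma adj_iff (h : 3 ≤ n) {x y : ANVertex n} :
    (AN n).Adj x y ↔ x.1⁻¹ * y.1 ∈ gens (Fin.castLEEmb h) := by
  rw [(AN n).adj_comm]
  exact ANAdj_iff h

lemma subsingleton_commonNeighbors (h : 3 ≤ n) {a c : ANVertex n} (hac : a ≠ c) :
    ((AN n).commonNeighbors a c).Subsingleton := by
  intro b hb z hz
  rw [mem_commonNeighbors, adj_iff h, adj_iff h] at hb hz
  have hne : (a.1⁻¹ * b.1) * (b.1⁻¹ * c.1) ≠ 1 := by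
    rw [mul_assoc, mul_inv_cancel_left, Ne, inv_mul_eq_one]
    exact fun hv => hac (Subtype.ext hv)
  have hfirst := eq_of_mul_eq_mul hb.1 (by simpa using inv_mem_gens hb.2) hz.1
    (by simpa using inv_mem_gens hz.2) (by group) hne
  exact Subtype.ext (mul_left_cancel hfirst)

lemma inv_mul_eq_rot_or (h : 3 ≤ n) {a b : ANVertex n} (hab : (AN n).Adj a b)
    (hcommon : ((AN n).commonNeighbors a b).Nonempty) :
    a.1⁻¹ * b.1 = rot (Fin.castLEEmb h) ∨ a.1⁻¹ * b.1 = (rot (Fin.castLEEmb h))⁻¹ := by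
  obtain ⟨x, hax, hbx⟩ := hcommon
  rw [mem_neighborSet, adj_iff h] at hax hbx
  rw [adj_iff h] at hab
  exact eq_rot_or_of_mul_mem_gens hab hbx (by simpa [mul_assoc] using hax)

/-- Every vertex lies on a single triangle, spanned by the rotation edges. -/
lemma adj_of_commonNeighbors_nonempty (h : 3 ≤ n) {a b c : ANVertex n} (hab : (AN n).Adj a b)
    (hbc : (AN n).Adj b c) (hac : a ≠ c) (hab' : ((AN n).commonNeighbors a b).Nonempty)
    (hbc' : ((AN n).commonNeighbors b c).Nonempty) : (AN n).Adj a c := by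
  have hu := inv_mul_eq_rot_or h hab.symm (commonNeighbors_symm (AN n) a b ▸ hab')
  have hv := inv_mul_eq_rot_or h hbc hbc'
  have hne : b.1⁻¹ * a.1 ≠ b.1⁻¹ * c.1 := fun heq => hac (Subtype.ext (mul_left_cancel heq))
  rw [adj_iff h, show a.1⁻¹ * c.1 = (b.1⁻¹ * a.1)⁻¹ * (b.1⁻¹ * c.1) by group]
  rcases hu with hu | hu <;> rcases hv with hv | hv <;> rw [hu, hv] at hne ⊢
  · exact absurd rfl hne
  · rw [← mul_inv_rev, rot_mul_rot, inv_inv]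
    exact Or.inl rfl
  · rw [inv_inv, rot_mul_rot]
    exact Or.inr (Or.inl rfl)
  · exact absurd rfl hne

/-- The subnetwork `AN_n^i` as a graph on all vertices of `AN_n`, those off the layer being
isolated. -/
def layerGraph (n : ℕ) (hn : 1 ≤ n) (i : Fin n) : SimpleGraph (ANVertex n) where
  Adj x y := (AN n).Adj x y ∧ x ∈ ANLayer n hn i ∧ y ∈ ANLayer n hn i
  symm := ⟨fun _ _ h => ⟨h.1.symm, h.2.2, h.2.1⟩⟩
  loopless := ⟨fun _ h => (AN n).irrefl h.1⟩

variable {hn : 1 ≤ n} {i : Fin n}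

lemma layerNbhd_eq_extNbhd {S : Set (ANVertex n)} (hS : S ⊆ ANLayer n hn i) :
    layerNbhd n hn i S = (layerGraph n hn i).extNbhd S := by
  ext z
  simp only [layerNbhd, SimpleGraph.extNbhd, Set.mem_ofPred_eq]
  exact ⟨fun ⟨hz, hzS, x, hx, hzx⟩ => ⟨hzS, x, hx, hzx, hz, hS hx⟩,
    fun ⟨hzS, x, hx, hzx, hz, _⟩ => ⟨hz, hzS, x, hx, hzx⟩⟩

lemma commonNeighbors_layerGraph_subset (a c : ANVertex n) :
    (layerGraph n hn i).commonNeighbors a c ⊆ (AN n).commonNeighbors a c :=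
  fun _ hx => ⟨hx.1.1, hx.2.1⟩

lemma ncard_neighborSet_layerGraph (h : 4 ≤ n) {x : ANVertex n} (hx : x ∈ ANLayer n hn i) :
    ((layerGraph n hn i).neighborSet x).ncard = n - 2 := by
  set e := Fin.castLEEmb (show 3 ≤ n by omega)
  set last : Fin n := ⟨n - 1, by omega⟩
  have hlast : last ∉ Set.range e := (notMem_range_castLEEmb_iff _).2 (by simp [last]; omega)
  have himage : (fun y : ANVertex n => x.1⁻¹ * y.1) '' (layerGraph n hn i).neighborSet x =
      {g ∈ gens e | g last = last} := by
    ext g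
    constructor
    · rintro ⟨y, ⟨hxy, -, hy⟩, rfl⟩
      refine ⟨(adj_iff _).1 hxy, ?_⟩
      rw [Perm.mul_apply, Perm.inv_eq_iff_eq]
      exact hy.trans hx.symm
    · rintro ⟨hg, hgl⟩
      refine ⟨⟨x.1 * g, by rw [Perm.sign_mul, x.2, sign_of_mem_gens hg, one_mul]⟩,
        ⟨(adj_iff _).2 (by simpa using hg), hx, ?_⟩, by simp⟩
      show x.1 (g last) = i
      rw [hgl]
      exact hx
  rw [← Set.ncard_image_of_injective _ fun y z hyz => Subtype.ext (mul_left_cancel hyz), himage,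
    ncard_setOf_mem_gens_apply_eq_self hlast, Nat.card_eq_fintype_card, Fintype.card_fin]

lemma ncard_layerNbhd_add (h : 4 ≤ n) {a b c : ANVertex n} (ha : a ∈ ANLayer n hn i)
    (hb : b ∈ ANLayer n hn i) (hc : c ∈ ANLayer n hn i) (hab : (AN n).Adj a b)
    (hbc : (AN n).Adj b c) (hac : a ≠ c) :
    (layerNbhd n hn i {a, b, c}).ncard + ((layerGraph n hn i).commonNeighbors a b).ncard +
      ((layerGraph n hn i).commonNeighbors b c).ncard + 4 = 3 * (n - 2) := by
  have hab' : (layerGraph n hn i).Adj a b := ⟨hab, ha, hb⟩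
  have hbc' : (layerGraph n hn i).Adj b c := ⟨hbc, hb, hc⟩
  have hcommon : (layerGraph n hn i).commonNeighbors a c = {b} :=
    ((subsingleton_commonNeighbors (by omega) hac).anti
      (commonNeighbors_layerGraph_subset a c)).eq_singleton_of_mem ⟨hab', hbc'.symm⟩
  rw [layerNbhd_eq_extNbhd (by simp [Set.insert_subset_iff, ha, hb, hc]),
    SimpleGraph.ncard_extNbhd_add hab' hbc' hac hcommon, ncard_neighborSet_layerGraph h ha,
    ncard_neighborSet_layerGraph h hb, ncard_neighborSet_layerGraph h hc]
  ring

lemma ncard_commonNeighbors_layerGraph_le_one (h : 3 ≤ n) {a c : ANVertex n} (hac : a ≠ c) :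
    ((layerGraph n hn i).commonNeighbors a c).ncard ≤ 1 :=
  Set.ncard_le_one_iff_subsingleton.2 ((subsingleton_commonNeighbors h hac).anti
    (commonNeighbors_layerGraph_subset a c))

lemma ncard_layerNbhd_of_triangle (h : 4 ≤ n) {a b c : ANVertex n} (ha : a ∈ ANLayer n hn i)
    (hb : b ∈ ANLayer n hn i) (hc : c ∈ ANLayer n hn i) (hab : (AN n).Adj a b)
    (hbc : (AN n).Adj b c) (hac : (AN n).Adj a c) :
    (layerNbhd n hn i {a, b, c}).ncard = 3 * n - 12 := by
  have hcount := ncard_layerNbhd_add h ha hb hc hab hbc hac.ne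
  have hab' : 0 < ((layerGraph n hn i).commonNeighbors a b).ncard :=
    (Set.ncard_pos).2 ⟨c, ⟨hac, ha, hc⟩, ⟨hbc, hb, hc⟩⟩
  have hbc' : 0 < ((layerGraph n hn i).commonNeighbors b c).ncard :=
    (Set.ncard_pos).2 ⟨a, ⟨hab.symm, hb, ha⟩, ⟨hac.symm, hc, ha⟩⟩
  have := ncard_commonNeighbors_layerGraph_le_one (hn := hn) (i := i) (by omega) hab.ne
  have := ncard_commonNeighbors_layerGraph_le_one (hn := hn) (i := i) (by omega) hbc.ne
  omega

lemma ncard_layerNbhd_of_twoPath (h : 4 ≤ n) {a b c : ANVertex n} (ha : a ∈ ANLayer n hn i)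
    (hb : b ∈ ANLayer n hn i) (hc : c ∈ ANLayer n hn i) (hab : (AN n).Adj a b)
    (hbc : (AN n).Adj b c) (hac : a ≠ c) (hnac : ¬(AN n).Adj a c) :
    3 * n - 11 ≤ (layerNbhd n hn i {a, b, c}).ncard ∧
      (layerNbhd n hn i {a, b, c}).ncard ≤ 3 * n - 10 := by
  have hcount := ncard_layerNbhd_add h ha hb hc hab hbc hac
  have hzero : ((layerGraph n hn i).commonNeighbors a b).ncard = 0 ∨
      ((layerGraph n hn i).commonNeighbors b c).ncard = 0 := by
    by_contra! hpos
    exact hnac (adj_of_commonNeighbors_nonempty (by omega) hab hbc hac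
      ((Set.nonempty_of_ncard_ne_zero hpos.1).mono (commonNeighbors_layerGraph_subset _ _))
      ((Set.nonempty_of_ncard_ne_zero hpos.2).mono (commonNeighbors_layerGraph_subset _ _)))
  have := ncard_commonNeighbors_layerGraph_le_one (hn := hn) (i := i) (by omega) hab.ne
  have := ncard_commonNeighbors_layerGraph_le_one (hn := hn) (i := i) (by omega) hbc.ne
  omega

end Network

end AN

/-- For `n ≥ 6`, a connected induced subgraph `H` of `AN_n^i` with exactly `3`
vertices is either a `3`-cycle or a `2`-path; moreover `|N(H)| = 3n − 12` if `H` is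
a `3`-cycle, and `3n − 11 ≤ |N(H)| ≤ 3n − 10` if `H` is a `2`-path. -/
theorem AN_layer_subgraph_three (n : ℕ) (hn : 6 ≤ n) (i : Fin n)
    (S : Set (ANVertex n)) (hS : S ⊆ ANLayer n (by omega) i)
    (hcard : S.ncard = 3) (hconn : ((AN n).induce S).Connected) :
    (SetIsTriangle n S ∨ SetIsTwoPath n S) ∧
    (SetIsTriangle n S → (layerNbhd n (by omega) i S).ncard = 3 * n - 12) ∧
    (SetIsTwoPath n S →
      3 * n - 11 ≤ (layerNbhd n (by omega) i S).ncard ∧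
      (layerNbhd n (by omega) i S).ncard ≤ 3 * n - 10) := by
  refine ⟨?_, ?_, ?_⟩
  · obtain ⟨a, b, c, hSabc, hac, hab, hbc⟩ := exists_two_path_of_induce_connected hcard hconn
    by_cases hadj : (AN n).Adj a c
    · exact Or.inl ⟨a, b, c, hSabc, hab, hbc, hadj⟩
    · exact Or.inr ⟨a, b, c, hSabc, hac, hab, hbc, hadj⟩
  · rintro ⟨a, b, c, rfl, hab, hbc, hac⟩
    obtain ⟨ha, hb, hc⟩ : _ ∧ _ ∧ _ := by simpa [Set.insert_subset_iff] using hS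
    exact AN.ncard_layerNbhd_of_triangle (by omega) ha hb hc hab hbc hac
  · rintro ⟨a, b, c, rfl, hac, hab, hbc, hnac⟩
    obtain ⟨ha, hb, hc⟩ : _ ∧ _ ∧ _ := by simpa [Set.insert_subset_iff] using hS
    exact AN.ncard_layerNbhd_of_twoPath (by omega) ha hb hc hab hbc hac hnac
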